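/- Minkowski version: Let U ⊆ ℝ² be open and S : U → ℝ³ smooth, and equip ℝ³ with the Minkowski bilinear form ⟨x, y⟩_L = x₁y₁ + x₂y₂ − x₃y₃ and the Lorentzian cross product x ×_L y = (x₂y₃ − x₃y₂, x₃y₁ − x₁y₃, −(x₁y₂ − x₂y₁)), characterized by ⟨x ×_L y, z⟩_L = det(x, y, z). Let N = S_u ×_L S_v and assume the surface is spacelike along a curve: let (u, v) : I → U be twice differentiable, γ(t) = S(u(t), v(t)), n(t) = N(u(t), v(t)), with ⟨n(t), n(t)⟩_L < 0 (timelike normal) and ⟨γ'(t), γ'(t)⟩_L > 0 (spacelike, nonzero velocity) for all t; write |n| = √(−⟨n, n⟩_L). Let κ : I → ℝ. Then γ''(t) − (⟨γ''(t), n(t)⟩_L / ⟨n(t), n(t)⟩_L) n(t) = κ(t) · (γ'(t) ×_L n(t)) / |n(t)| holds for all t ∈ I if and only if for all t ∈ I: (i) ⟨γ''(t), γ'(t)⟩_L = 0 (equivalently ⟨γ', γ'⟩_L is constant), and (ii) ⟨γ''(t), γ'(t) ×_L n(t)⟩_L = κ(t) ⟨γ'(t), γ'(t)⟩_L |n(t)|.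 -/

import Mathlib

/-- The Minkowski bilinear form on `ℝ³` with signature `(+, +, -)`. -/
def minkInner (x y : Fin 3 → ℝ) : ℝ := x 0 * y 0 + x 1 * y 1 - x 2 * y 2

/-- The Lorentzian cross product on Minkowski 3-space, characterized by
`⟨x ×_L y, z⟩_L = det (x, y, z)`. -/
def minkCross (x y : Fin 3 → ℝ) : Fin 3 → ℝ :=
  ![x 1 * y 2 - x 2 * y 1, x 2 * y 0 - x 0 * y 2, -(x 0 * y 1 - x 1 * y 0)]

lemma minkInner_comm (x y : Fin 3 → ℝ) : minkInner x y = minkInner y x := by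
  simp [minkInner]; ring

lemma minkInner_smul_add_left (r q : ℝ) (x y z : Fin 3 → ℝ) :
    minkInner (r • x + q • y) z = r * minkInner x z + q * minkInner y z := by
  simp [minkInner, Pi.smul_apply, smul_eq_mul]; ring

lemma minkInner_sub_sub_left (r q : ℝ) (w x y z : Fin 3 → ℝ) :
    minkInner (w - r • x - q • y) z
      = minkInner w z - r * minkInner x z - q * minkInner y z := by
  simp [minkInner, Pi.smul_apply, smul_eq_mul]; ring

lemma minkCross_inner_left (x y : Fin 3 → ℝ) : minkInner (minkCross x y) x = 0 := by
  simp [minkInner, minkCross]; ring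

lemma minkCross_inner_right (x y : Fin 3 → ℝ) : minkInner (minkCross x y) y = 0 := by
  simp [minkInner, minkCross]; ring

lemma minkCross_inner_self (x y : Fin 3 → ℝ) :
    minkInner (minkCross x y) (minkCross x y)
      = minkInner x y ^ 2 - minkInner x x * minkInner y y := by
  simp [minkInner, minkCross]; ring

lemma minkInner_combo_cross (a b : ℝ) (x y : Fin 3 → ℝ) :
    minkInner (a • x + b • y) (minkCross x y) = 0 := by
  simp [minkInner, minkCross, Pi.smul_apply, smul_eq_mul]; ring

/-- A vector Minkowski-orthogonal to `a`, `b` and `a ×_L b` vanishes whenever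
`a ×_L b` is non-null (so that the three vectors form a basis). -/
lemma mink_decomp (a b w : Fin 3 → ℝ)
    (hcc : minkInner (minkCross a b) (minkCross a b) ≠ 0)
    (h1 : minkInner w a = 0) (h2 : minkInner w b = 0)
    (h3 : minkInner w (minkCross a b) = 0) : w = 0 := by
  simp only [minkInner, minkCross, Matrix.cons_val_zero, Matrix.cons_val_one,
    Matrix.head_cons, Matrix.cons_val_two, Matrix.tail_cons] at hcc h1 h2 h3
  set c0 := a 1 * b 2 - a 2 * b 1 with hc0
  set c1 := a 2 * b 0 - a 0 * b 2 with hc1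
  set c2 := -(a 0 * b 1 - a 1 * b 0) with hc2
  have hD : c0 ^ 2 + c1 ^ 2 - c2 ^ 2 ≠ 0 := by
    intro h; apply hcc
    simp only [hc0, hc1, hc2] at h ⊢
    linear_combination h
  have k0 : w 0 = 0 := by
    have h0 : (c0 ^ 2 + c1 ^ 2 - c2 ^ 2) * w 0 = 0 := by
      simp only [hc0, hc1, hc2] at h3 ⊢
      linear_combination (b 1 * (-(a 0 * b 1 - a 1 * b 0)) - b 2 * (a 2 * b 0 - a 0 * b 2)) * h1
        + ((a 2 * (a 2 * b 0 - a 0 * b 2)) - a 1 * (-(a 0 * b 1 - a 1 * b 0))) * h2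
        + (a 1 * b 2 - a 2 * b 1) * h3
    exact (mul_eq_zero.mp h0).resolve_left hD
  have k1 : w 1 = 0 := by
    have h0 : (c0 ^ 2 + c1 ^ 2 - c2 ^ 2) * w 1 = 0 := by
      simp only [hc0, hc1, hc2] at h3 ⊢
      linear_combination (b 2 * (a 1 * b 2 - a 2 * b 1) - b 0 * (-(a 0 * b 1 - a 1 * b 0))) * h1
        + (a 0 * (-(a 0 * b 1 - a 1 * b 0)) - a 2 * (a 1 * b 2 - a 2 * b 1)) * h2
        + (a 2 * b 0 - a 0 * b 2) * h3
    exact (mul_eq_zero.mp h0).resolve_left hD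
  have k2 : w 2 = 0 := by
    have h0 : (c0 ^ 2 + c1 ^ 2 - c2 ^ 2) * w 2 = 0 := by
      simp only [hc0, hc1, hc2] at h3 ⊢
      linear_combination (b 1 * (a 1 * b 2 - a 2 * b 1) - b 0 * (a 2 * b 0 - a 0 * b 2)) * h1
        + (a 0 * (a 2 * b 0 - a 0 * b 2) - a 1 * (a 1 * b 2 - a 2 * b 1)) * h2
        + (-(a 0 * b 1 - a 1 * b 0)) * h3
    exact (mul_eq_zero.mp h0).resolve_left hD
  funext i
  fin_cases i
  · exact k0
  · exact k1
  · exact k2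

/-- Proposition 2.6: for a curve `γ = S (u, v)` on a spacelike surface
`S : U → ℝ^{2,1}` with timelike normal `N = S_u ×_L S_v`, the prescribed geodesic
curvature (magnetic geodesic) equation is equivalent to the system
`⟨γ'', γ'⟩_L = 0` (constant speed) and `⟨γ'', γ' ×_L n⟩_L = κ ⟨γ', γ'⟩_L |n|`. -/
theorem magnetic_geodesic_iff_system_minkowski
    (U : Set (ℝ × ℝ)) (hU : IsOpen U)
    (S : ℝ × ℝ → (Fin 3 → ℝ)) (hS : ContDiffOn ℝ (⊤ : ℕ∞) S U)
    (Su Sv N : ℝ × ℝ → (Fin 3 → ℝ))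
    (hSu : ∀ p ∈ U, Su p = fderiv ℝ S p (1, 0))
    (hSv : ∀ p ∈ U, Sv p = fderiv ℝ S p (0, 1))
    (hN : ∀ p ∈ U, N p = minkCross (Su p) (Sv p))
    (I : Set ℝ) (u v : ℝ → ℝ) (hUV : ∀ t ∈ I, (u t, v t) ∈ U)
    (u' v' : ℝ → ℝ)
    (hu : ∀ t ∈ I, HasDerivAt u (u' t) t)
    (hv : ∀ t ∈ I, HasDerivAt v (v' t) t)
    (γ γ' γ'' : ℝ → (Fin 3 → ℝ))
    (hγdef : ∀ t, γ t = S (u t, v t))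
    (hγ : ∀ t ∈ I, HasDerivAt γ (γ' t) t)
    (hγ' : ∀ t ∈ I, HasDerivAt γ' (γ'' t) t)
    (n : ℝ → (Fin 3 → ℝ)) (hn : ∀ t, n t = N (u t, v t))
    (htimelike : ∀ t ∈ I, minkInner (n t) (n t) < 0)
    (hspacelike : ∀ t ∈ I, 0 < minkInner (γ' t) (γ' t))
    (κ : ℝ → ℝ) :
    (∀ t ∈ I, γ'' t - (minkInner (γ'' t) (n t) / minkInner (n t) (n t)) • n t
        = (κ t / Real.sqrt (-(minkInner (n t) (n t)))) • minkCross (γ' t) (n t)) ↔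
    ((∀ t ∈ I, minkInner (γ'' t) (γ' t) = 0) ∧
      (∀ t ∈ I, minkInner (γ'' t) (minkCross (γ' t) (n t))
        = κ t * minkInner (γ' t) (γ' t) * Real.sqrt (-(minkInner (n t) (n t))))) := by
  -- the velocity is tangent, hence Minkowski-orthogonal to the normal
  have hort : ∀ t ∈ I, minkInner (γ' t) (n t) = 0 := by
    intro t ht
    have hp := hUV t ht
    have hdS : DifferentiableAt ℝ S (u t, v t) :=
      (hS.contDiffAt (hU.mem_nhds hp)).differentiableAt (by simp)
    have hc : HasDerivAt (fun s => (u s, v s)) (u' t, v' t) t := (hu t ht).prodMk (hv t ht)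
    have hcomp : HasDerivAt (fun s => S (u s, v s)) (fderiv ℝ S (u t, v t) (u' t, v' t)) t :=
      hdS.hasFDerivAt.comp_hasDerivAt t hc
    have hγeq : γ' t = fderiv ℝ S (u t, v t) (u' t, v' t) := by
      have hfun : γ = fun s => S (u s, v s) := funext hγdef
      have h1 : HasDerivAt γ (fderiv ℝ S (u t, v t) (u' t, v' t)) t := by
        rw [hfun]; exact hcomp
      exact (hγ t ht).unique h1
    have hsplit : γ' t = u' t • Su (u t, v t) + v' t • Sv (u t, v t) := by
      rw [hγeq, hSu _ hp, hSv _ hp]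
      have hpr : ((u' t, v' t) : ℝ × ℝ) = u' t • ((1 : ℝ), (0 : ℝ)) + v' t • ((0 : ℝ), (1 : ℝ)) := by
        simp [Prod.ext_iff]
      rw [hpr, map_add, map_smul, map_smul]
    rw [hsplit, hn, hN _ hp]
    exact minkInner_combo_cross _ _ _ _
  constructor
  · rintro H
    constructor
    · intro t ht
      have hD := htimelike t ht
      have hgn := hort t ht
      have heq := H t ht
      have hgg : γ'' t = (minkInner (γ'' t) (n t) / minkInner (n t) (n t)) • n t
          + (κ t / Real.sqrt (-(minkInner (n t) (n t)))) • minkCross (γ' t) (n t) := by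
        rw [← heq]; abel
      rw [hgg, minkInner_smul_add_left, minkInner_comm (n t) (γ' t), hgn,
        minkCross_inner_left]
      ring
    · intro t ht
      have hD := htimelike t ht
      have hgn := hort t ht
      have hs : 0 < Real.sqrt (-(minkInner (n t) (n t))) := Real.sqrt_pos.2 (by linarith)
      have hs2 : Real.sqrt (-(minkInner (n t) (n t))) ^ 2 = -(minkInner (n t) (n t)) :=
        Real.sq_sqrt (by linarith)
      have heq := H t ht
      have hgg : γ'' t = (minkInner (γ'' t) (n t) / minkInner (n t) (n t)) • n t
          + (κ t / Real.sqrt (-(minkInner (n t) (n t)))) • minkCross (γ' t) (n t) := by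
        rw [← heq]; abel
      rw [hgg, minkInner_smul_add_left,
        minkInner_comm (n t) (minkCross (γ' t) (n t)), minkCross_inner_right,
        minkCross_inner_self, hgn]
      have hsne : Real.sqrt (-(minkInner (n t) (n t))) ≠ 0 := ne_of_gt hs
      field_simp
      linear_combination (-(κ t * minkInner (γ' t) (γ' t))) * hs2
  · rintro ⟨H1, H2⟩ t ht
    have hD := htimelike t ht
    have hgg' := hspacelike t ht
    have hgn := hort t ht
    have hs : 0 < Real.sqrt (-(minkInner (n t) (n t))) := Real.sqrt_pos.2 (by linarith)
    have hs2 : Real.sqrt (-(minkInner (n t) (n t))) ^ 2 = -(minkInner (n t) (n t)) :=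
      Real.sq_sqrt (by linarith)
    have hsne : Real.sqrt (-(minkInner (n t) (n t))) ≠ 0 := ne_of_gt hs
    have hDne : minkInner (n t) (n t) ≠ 0 := ne_of_lt hD
    set q := minkInner (γ'' t) (n t) / minkInner (n t) (n t) with hq
    set r := κ t / Real.sqrt (-(minkInner (n t) (n t))) with hr
    have hcc : minkInner (minkCross (γ' t) (n t)) (minkCross (γ' t) (n t))
        = -(minkInner (γ' t) (γ' t) * minkInner (n t) (n t)) := by
      rw [minkCross_inner_self, hgn]; ring
    have hccne : minkInner (minkCross (γ' t) (n t)) (minkCross (γ' t) (n t)) ≠ 0 := by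
      rw [hcc]; nlinarith
    have hw : γ'' t - q • n t - r • minkCross (γ' t) (n t) = 0 := by
      apply mink_decomp (γ' t) (n t)
      · exact hccne
      · rw [minkInner_sub_sub_left, H1 t ht, minkInner_comm (n t) (γ' t), hgn,
          minkCross_inner_left]
        ring
      · rw [minkInner_sub_sub_left, minkCross_inner_right, hq]
        field_simp
        ring
      · rw [minkInner_sub_sub_left, H2 t ht,
          minkInner_comm (n t) (minkCross (γ' t) (n t)), minkCross_inner_right, hcc, hr]
        field_simp
        linear_combination (κ t * minkInner (γ' t) (γ' t)) * hs2
    exact sub_eq_zero.mp hw
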